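/- Let M be a symmetric positive definite n×n real matrix, let D, Θ_y, Θ_w, Θ_v be n×n diagonal matrices with strictly positive diagonal entries, let α > 0, and let L be any n×n real matrix. Set Θ := α Θ_w⁻¹ + α Θ_v⁻¹, define S := L (M + Θ_y)⁻¹ Lᵀ + (1/α) [M − (Θ + M⁻¹)⁻¹], define the diagonal matrix M̂ := [(1/α) (D − (Θ + D⁻¹)⁻¹)]^{1/2} (D + Θ_y)^{1/2} (entrywise diagonal square roots of diagonal positive definite matrices), define Ŝ := (L + M̂) (M + Θ_y)⁻¹ (L + M̂)ᵀ, and let r := min over nonzero v of (vᵀ [M − (Θ + M⁻¹)⁻¹] v) / (vᵀ [D − (Θ + D⁻¹)⁻¹] v). Then for every vector v, vᵀ S v ≥ (1/2) · min{ r · min{λmin(D⁻¹M), 1}, 1} · vᵀ Ŝ v. -/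

import Mathlib

/-!
Write `B = M + Θ_y`, `x = Lᵀv`, `y = M̂v`, `E = M - (Θ + M⁻¹)⁻¹` and `F = D - (Θ + D⁻¹)⁻¹`, so that
`vᵀSv = xᵀB⁻¹x + α⁻¹ vᵀEv` and `vᵀŜv = (x + y)ᵀB⁻¹(x + y) ≤ 2 xᵀB⁻¹x + 2 yᵀB⁻¹y`.
With `μ = min{λmin(D⁻¹M), 1}` we have `μ (D + Θ_y) ≤ B` in the Loewner order, and inversion
reverses it; since `M̂² = α⁻¹ F (D + Θ_y)` this gives `r μ yᵀB⁻¹y ≤ α⁻¹ r vᵀFv ≤ α⁻¹ vᵀEv`.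
The matrix `E` is positive semidefinite because `Θ + M⁻¹ ≥ M⁻¹`, again by reversing the order.
As `min{rμ, 1} ≤ 1`, the two halves of `vᵀŜv` are absorbed by the two terms of `vᵀSv`.
-/

open Matrix

/-- The set of Rayleigh quotients `(vᵀ P v)/(vᵀ Q v)` over nonzero real vectors `v`.
For `P = M` symmetric positive definite and `Q = D` diagonal positive definite,
`sInf` of this set is `λmin(D⁻¹M)`. -/
def rayleighSet {n : ℕ} (P Q : Matrix (Fin n) (Fin n) ℝ) : Set ℝ :=
  {r | ∃ v : Fin n → ℝ, v ≠ 0 ∧ r = (v ⬝ᵥ (P *ᵥ v)) / (v ⬝ᵥ (Q *ᵥ v))}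

namespace Matrix

section QuadraticForms

variable {ι : Type*} [Fintype ι]

lemma dotProduct_mulVec_comm_of_isHermitian {A : Matrix ι ι ℝ} (hA : A.IsHermitian)
    (x y : ι → ℝ) : x ⬝ᵥ (A *ᵥ y) = y ⬝ᵥ (A *ᵥ x) := by
  rw [dotProduct_mulVec, ← mulVec_transpose, ← conjTranspose_eq_transpose_of_trivial, hA,
    dotProduct_comm]

lemma dotProduct_mul_mul_transpose_mulVec (L A : Matrix ι ι ℝ) (v : ι → ℝ) :
    v ⬝ᵥ ((L * A * Lᵀ) *ᵥ v) = (Lᵀ *ᵥ v) ⬝ᵥ (A *ᵥ (Lᵀ *ᵥ v)) := by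
  rw [← mulVec_mulVec, ← mulVec_mulVec, dotProduct_mulVec, ← mulVec_transpose]

lemma PosSemidef.dotProduct_add_mulVec_add_le {A : Matrix ι ι ℝ} (hA : A.PosSemidef)
    (x y : ι → ℝ) :
    (x + y) ⬝ᵥ (A *ᵥ (x + y)) ≤ 2 * (x ⬝ᵥ (A *ᵥ x)) + 2 * (y ⬝ᵥ (A *ᵥ y)) := by
  have h := hA.dotProduct_mulVec_nonneg (x - y)
  have hxy := dotProduct_mulVec_comm_of_isHermitian hA.isHermitian x y
  simp only [star_trivial, mulVec_add, mulVec_sub, dotProduct_add, dotProduct_sub,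
    add_dotProduct, sub_dotProduct] at h ⊢
  linarith

lemma PosSemidef.half_min_mul_dotProduct_add_mulVec_add_le {B : Matrix ι ι ℝ}
    (hB : B.PosSemidef) (x y : ι → ℝ) {a e g r μ : ℝ} (ha : 0 ≤ a) (hr : 0 ≤ r) (hμ : 0 ≤ μ)
    (hy : μ * (y ⬝ᵥ (B *ᵥ y)) ≤ a * g) (hg : r * g ≤ e) :
    1 / 2 * min (r * μ) 1 * ((x + y) ⬝ᵥ (B *ᵥ (x + y))) ≤ x ⬝ᵥ (B *ᵥ x) + a * e := by
  set c := min (r * μ) 1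
  have hc : 0 ≤ c := le_min (mul_nonneg hr hμ) zero_le_one
  have hx : c * (x ⬝ᵥ (B *ᵥ x)) ≤ x ⬝ᵥ (B *ᵥ x) :=
    mul_le_of_le_one_left (by simpa using hB.dotProduct_mulVec_nonneg x) (min_le_right _ _)
  have hy' : c * (y ⬝ᵥ (B *ᵥ y)) ≤ a * e := calc
    c * (y ⬝ᵥ (B *ᵥ y)) ≤ r * (μ * (y ⬝ᵥ (B *ᵥ y))) := by
      rw [← mul_assoc]
      exact mul_le_mul_of_nonneg_right (min_le_left _ _)
        (by simpa using hB.dotProduct_mulVec_nonneg y)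
    _ ≤ a * (r * g) := by nlinarith
    _ ≤ a * e := mul_le_mul_of_nonneg_left hg ha
  calc 1 / 2 * c * ((x + y) ⬝ᵥ (B *ᵥ (x + y)))
      ≤ 1 / 2 * c * (2 * (x ⬝ᵥ (B *ᵥ x)) + 2 * (y ⬝ᵥ (B *ᵥ y))) :=
        mul_le_mul_of_nonneg_left (hB.dotProduct_add_mulVec_add_le x y) (by positivity)
    _ = c * (x ⬝ᵥ (B *ᵥ x)) + c * (y ⬝ᵥ (B *ᵥ y)) := by ring
    _ ≤ _ := add_le_add hx hy'

variable [DecidableEq ι]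

lemma PosDef.mul_dotProduct_inv_mulVec_le {K B : Matrix ι ι ℝ} (hK : K.PosDef) (hB : IsUnit B)
    {μ : ℝ} (hμ : 0 ≤ μ) (hKB : ∀ u, μ * (u ⬝ᵥ (K *ᵥ u)) ≤ u ⬝ᵥ (B *ᵥ u)) (w : ι → ℝ) :
    μ * (w ⬝ᵥ (B⁻¹ *ᵥ w)) ≤ w ⬝ᵥ (K⁻¹ *ᵥ w) := by
  set u := B⁻¹ *ᵥ w
  set z := K⁻¹ *ᵥ w
  have hBu : B *ᵥ u = w := by
    rw [mulVec_mulVec, mul_nonsing_inv _ ((isUnit_iff_isUnit_det B).mp hB), one_mulVec]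
  have hKz : K *ᵥ z = w := by
    rw [mulVec_mulVec, mul_nonsing_inv _ ((isUnit_iff_isUnit_det K).mp hK.isUnit), one_mulVec]
  -- expand `0 ≤ (z - μ u)ᵀ K (z - μ u)` and bound `μ² uᵀKu` by `μ uᵀBu = μ wᵀu`
  have h := hK.posSemidef.dotProduct_mulVec_nonneg (z - μ • u)
  have hzu := dotProduct_mulVec_comm_of_isHermitian hK.isHermitian z u
  have hu := mul_le_mul_of_nonneg_left (hKB u) hμ
  simp only [star_trivial, mulVec_sub, mulVec_smul, dotProduct_sub, sub_dotProduct,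
    dotProduct_smul, smul_dotProduct, smul_eq_mul, hKz, hBu] at h hu hzu
  rw [dotProduct_comm u w] at h hu hzu
  rw [dotProduct_comm z w] at h
  nlinarith

lemma PosDef.dotProduct_sub_inv_add_inv_mulVec_nonneg {M Θ : Matrix ι ι ℝ} (hM : M.PosDef)
    (hΘ : Θ.PosSemidef) (u : ι → ℝ) :
    0 ≤ u ⬝ᵥ ((M - (Θ + M⁻¹)⁻¹) *ᵥ u) := by
  rw [sub_mulVec, dotProduct_sub, sub_nonneg]
  have h := hM.inv.mul_dotProduct_inv_mulVec_le (hM.inv.posSemidef_add hΘ).isUnit zero_le_one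
    (fun w => by
      rw [one_mul, add_mulVec, dotProduct_add]
      simpa using hΘ.dotProduct_mulVec_nonneg w) u
  rwa [one_mul, nonsing_inv_nonsing_inv M ((isUnit_iff_isUnit_det M).mp hM.isUnit)] at h

lemma inv_diagonal_of_ne_zero {K : Type*} [Field K] {g : ι → K} (hg : ∀ i, g i ≠ 0) :
    (diagonal g)⁻¹ = diagonal g⁻¹ := by
  refine inv_eq_right_inv ?_
  rw [diagonal_mul_diagonal, ← diagonal_one]
  exact congrArg diagonal (funext fun i => mul_inv_cancel₀ (hg i))

lemma diagonal_sub_inv_add_inv_diagonal {θ d : ι → ℝ} (hθ : ∀ i, 0 ≤ θ i) (hd : ∀ i, 0 < d i) :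
    diagonal d - (diagonal θ + (diagonal d)⁻¹)⁻¹ = diagonal (d - (θ + d⁻¹)⁻¹) := by
  have hθd : ∀ i, θ i + d⁻¹ i ≠ 0 := fun i => by
    have := hθ i; have := hd i
    rw [Pi.inv_apply]
    positivity
  rw [inv_diagonal_of_ne_zero fun i => (hd i).ne', diagonal_add, inv_diagonal_of_ne_zero hθd,
    diagonal_sub]
  rfl

lemma dotProduct_diagonal_mulVec_of_sq_eq {m k g : ι → ℝ} (hk : ∀ i, k i ≠ 0)
    (hm : ∀ i, m i ^ 2 = g i * k i) (v : ι → ℝ) :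
    (diagonal m *ᵥ v) ⬝ᵥ ((diagonal k)⁻¹ *ᵥ (diagonal m *ᵥ v)) = v ⬝ᵥ (diagonal g *ᵥ v) := by
  rw [inv_diagonal_of_ne_zero hk]
  simp only [dotProduct, mulVec_diagonal, Pi.inv_apply]
  refine Finset.sum_congr rfl fun i _ => ?_
  have := hk i
  field_simp
  linear_combination v i ^ 2 * hm i

end QuadraticForms

end Matrix

lemma sub_inv_add_inv_pos {K : Type*} [Field K] [LinearOrder K] [IsStrictOrderedRing K]
    {a b : K} (ha : 0 < a) (hb : 0 < b) : 0 < b - (a + b⁻¹)⁻¹ := by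
  have h := inv_strictAnti₀ (inv_pos.2 hb) (lt_add_of_pos_left b⁻¹ ha)
  rw [inv_inv] at h
  exact sub_pos.2 h

section Rayleigh

variable {n : ℕ} {P Q : Matrix (Fin n) (Fin n) ℝ}

lemma zero_mem_lowerBounds_rayleighSet (hP : ∀ u, 0 ≤ u ⬝ᵥ (P *ᵥ u)) (hQ : Q.PosSemidef) :
    0 ∈ lowerBounds (rayleighSet P Q) := by
  rintro _ ⟨v, -, rfl⟩
  exact div_nonneg (hP v) (by simpa using hQ.dotProduct_mulVec_nonneg v)

lemma sInf_rayleighSet_nonneg (hP : ∀ u, 0 ≤ u ⬝ᵥ (P *ᵥ u)) (hQ : Q.PosSemidef) :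
    0 ≤ sInf (rayleighSet P Q) :=
  Real.sInf_nonneg (zero_mem_lowerBounds_rayleighSet hP hQ)

lemma sInf_rayleighSet_mul_le (hP : ∀ u, 0 ≤ u ⬝ᵥ (P *ᵥ u)) (hQ : Q.PosDef) (v : Fin n → ℝ) :
    sInf (rayleighSet P Q) * (v ⬝ᵥ (Q *ᵥ v)) ≤ v ⬝ᵥ (P *ᵥ v) := by
  rcases eq_or_ne v 0 with rfl | hv
  · simp
  have hQv : 0 < v ⬝ᵥ (Q *ᵥ v) := by simpa using hQ.dotProduct_mulVec_pos hv
  rw [← le_div_iff₀ hQv]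
  exact csInf_le ⟨0, zero_mem_lowerBounds_rayleighSet hP hQ.posSemidef⟩ ⟨v, hv, rfl⟩

lemma min_sInf_rayleighSet_one_mul_le (hP : ∀ u, 0 ≤ u ⬝ᵥ (P *ᵥ u)) (hQ : Q.PosDef)
    {R : Matrix (Fin n) (Fin n) ℝ} (hR : R.PosSemidef) (u : Fin n → ℝ) :
    min (sInf (rayleighSet P Q)) 1 * (u ⬝ᵥ ((Q + R) *ᵥ u)) ≤ u ⬝ᵥ ((P + R) *ᵥ u) := by
  have hQu : 0 ≤ u ⬝ᵥ (Q *ᵥ u) := by simpa using hQ.posSemidef.dotProduct_mulVec_nonneg u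
  have hRu : 0 ≤ u ⬝ᵥ (R *ᵥ u) := by simpa using hR.dotProduct_mulVec_nonneg u
  rw [add_mulVec, add_mulVec, dotProduct_add, dotProduct_add, mul_add]
  exact add_le_add
    ((mul_le_mul_of_nonneg_right (min_le_left _ _) hQu).trans (sInf_rayleighSet_mul_le hP hQ u))
    ((mul_le_mul_of_nonneg_right (min_le_right _ _) hRu).trans (one_mul _).le)

lemma min_sInf_rayleighSet_mul_dotProduct_inv_mulVec_le {M : Matrix (Fin n) (Fin n) ℝ}
    (hM : M.PosDef) {d dy m g : Fin n → ℝ} (hd : ∀ i, 0 < d i) (hdy : ∀ i, 0 < dy i)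
    (hm : ∀ i, m i ^ 2 = g i * (d i + dy i)) (v : Fin n → ℝ) :
    min (sInf (rayleighSet M (diagonal d))) 1 *
        ((diagonal m *ᵥ v) ⬝ᵥ ((M + diagonal dy)⁻¹ *ᵥ (diagonal m *ᵥ v))) ≤
      v ⬝ᵥ (diagonal g *ᵥ v) := by
  have hMu : ∀ u, 0 ≤ u ⬝ᵥ (M *ᵥ u) := fun u => by
    simpa using hM.posSemidef.dotProduct_mulVec_nonneg u
  have hK : (diagonal (d + dy)).PosDef := .diagonal fun i => add_pos (hd i) (hdy i)
  have hB : (M + diagonal dy).PosDef := hM.add_posSemidef (PosDef.diagonal hdy).posSemidef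
  calc _ ≤ (diagonal m *ᵥ v) ⬝ᵥ ((diagonal (d + dy))⁻¹ *ᵥ (diagonal m *ᵥ v)) :=
        hK.mul_dotProduct_inv_mulVec_le hB.isUnit
          (le_min (sInf_rayleighSet_nonneg hMu (PosDef.diagonal hd).posSemidef) zero_le_one)
          (fun u => by
            have := min_sInf_rayleighSet_one_mul_le hMu (PosDef.diagonal hd)
              (PosDef.diagonal hdy).posSemidef u
            rwa [diagonal_add] at this) _
    _ = v ⬝ᵥ (diagonal g *ᵥ v) :=
        dotProduct_diagonal_mulVec_of_sq_eq (fun i => (add_pos (hd i) (hdy i)).ne') hm v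

end Rayleigh

/-- Consistent mass matrix case: with `Θ = α Θ_w⁻¹ + α Θ_v⁻¹`,
`S = L (M + Θ_y)⁻¹ Lᵀ + (1/α)[M - (Θ + M⁻¹)⁻¹]`,
`M̂` the diagonal matrix with entries `√(((1/α)(D - (Θ + D⁻¹)⁻¹))ᵢᵢ) · √((D + Θ_y)ᵢᵢ)`,
`Ŝ = (L + M̂)(M + Θ_y)⁻¹(L + M̂)ᵀ`, and
`r = min_{v ≠ 0} (vᵀ[M - (Θ + M⁻¹)⁻¹]v)/(vᵀ[D - (Θ + D⁻¹)⁻¹]v)`,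
we have `vᵀ S v ≥ (1/2) · min{r · min{λmin(D⁻¹M), 1}, 1} · vᵀ Ŝ v` for all `v`. -/
theorem consistent_preconditioned_schur_bound {n : ℕ}
    (M : Matrix (Fin n) (Fin n) ℝ) (hM : M.PosDef)
    (d dy dw dv : Fin n → ℝ)
    (hd : ∀ i, 0 < d i) (hdy : ∀ i, 0 < dy i) (hdw : ∀ i, 0 < dw i) (hdv : ∀ i, 0 < dv i)
    (α : ℝ) (hα : 0 < α)
    (L : Matrix (Fin n) (Fin n) ℝ)
    (Θ S Mhat Shat : Matrix (Fin n) (Fin n) ℝ) (r : ℝ)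
    (hΘ : Θ = α • (Matrix.diagonal dw)⁻¹ + α • (Matrix.diagonal dv)⁻¹)
    (hS : S = L * (M + Matrix.diagonal dy)⁻¹ * Lᵀ + α⁻¹ • (M - (Θ + M⁻¹)⁻¹))
    (hMhat : Mhat = Matrix.diagonal (fun i =>
      Real.sqrt ((α⁻¹ • (Matrix.diagonal d - (Θ + (Matrix.diagonal d)⁻¹)⁻¹)) i i) *
        Real.sqrt ((Matrix.diagonal d + Matrix.diagonal dy) i i)))
    (hShat : Shat = (L + Mhat) * (M + Matrix.diagonal dy)⁻¹ * (L + Mhat)ᵀ)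
    (hr : r = sInf (rayleighSet (M - (Θ + M⁻¹)⁻¹)
      (Matrix.diagonal d - (Θ + (Matrix.diagonal d)⁻¹)⁻¹))) :
    ∀ v : Fin n → ℝ,
      v ⬝ᵥ (S *ᵥ v) ≥
        1 / 2 * min (r * min (sInf (rayleighSet M (Matrix.diagonal d))) 1) 1 *
          (v ⬝ᵥ (Shat *ᵥ v)) := by
  intro v
  obtain ⟨θ, hθ, rfl⟩ : ∃ θ : Fin n → ℝ, (∀ i, 0 < θ i) ∧ Θ = diagonal θ := by
    refine ⟨α • dw⁻¹ + α • dv⁻¹, fun i => ?_, ?_⟩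
    · have := hdw i; have := hdv i
      simp only [Pi.add_apply, Pi.smul_apply, Pi.inv_apply, smul_eq_mul]
      positivity
    · rw [hΘ, inv_diagonal_of_ne_zero fun i => (hdw i).ne',
        inv_diagonal_of_ne_zero fun i => (hdv i).ne', ← diagonal_smul, ← diagonal_smul,
        diagonal_add]
      rfl
  rw [diagonal_sub_inv_add_inv_diagonal (fun i => (hθ i).le) hd] at hr hMhat
  set f := d - (θ + d⁻¹)⁻¹
  have hf : ∀ i, 0 < f i := fun i => sub_inv_add_inv_pos (hθ i) (hd i)
  have hF : (diagonal f).PosDef := .diagonal hf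
  have hE := hM.dotProduct_sub_inv_add_inv_mulVec_nonneg (PosDef.diagonal hθ).posSemidef
  have hMhat_sq : ∀ i, Mhat i i ^ 2 = (α⁻¹ • f) i * (d i + dy i) := fun i => by
    rw [hMhat]
    simp only [diagonal_apply_eq, Matrix.smul_apply, Matrix.add_apply, Pi.smul_apply, smul_eq_mul]
    rw [mul_pow, Real.sq_sqrt (mul_nonneg (inv_nonneg.2 hα.le) (hf i).le),
      Real.sq_sqrt (add_pos (hd i) (hdy i)).le]
  have hMhat_diag : Mhat = diagonal fun i => Mhat i i := by rw [hMhat]; simp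
  have hμ : 0 ≤ min (sInf (rayleighSet M (diagonal d))) 1 := by
    refine le_min (sInf_rayleighSet_nonneg (fun u => ?_) (PosDef.diagonal hd).posSemidef) zero_le_one
    simpa using hM.posSemidef.dotProduct_mulVec_nonneg u
  have hy := min_sInf_rayleighSet_mul_dotProduct_inv_mulVec_le hM hd hdy hMhat_sq v
  rw [← hMhat_diag, diagonal_smul, smul_mulVec, dotProduct_smul, smul_eq_mul] at hy
  rw [ge_iff_le, hS, hShat, add_mulVec, dotProduct_add, dotProduct_mul_mul_transpose_mulVec,
    dotProduct_mul_mul_transpose_mulVec, smul_mulVec, dotProduct_smul, smul_eq_mul,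
    transpose_add, add_mulVec, hMhat_diag, diagonal_transpose, ← hMhat_diag]
  have hB := (hM.add_posSemidef (PosDef.diagonal hdy).posSemidef).inv.posSemidef
  exact hB.half_min_mul_dotProduct_add_mulVec_add_le _ _ (inv_nonneg.2 hα.le)
    (hr ▸ sInf_rayleighSet_nonneg hE hF.posSemidef) hμ hy (hr ▸ sInf_rayleighSet_mul_le hE hF v)
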